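/- Suppose sequences m_n ⇀ m and h_n ⇀ h weakly in L²([0,T]×Ω; ℝᵈ), with weak limits |m|²̄ of |m_n|², |h|²̄ of |h_n|², and m·h̄ of m_n·h_n (in the sense of distributions / weak-* limits of L¹ functions, assumed to exist). If ∫(|h|²̄ + m·h̄) dx dt = ∫(|h|² + m·h) dx dt and ∫(|m|²̄ − |m|²)dx dt ≤ −c ∫((|m|²̄ − |m|²) + κ₀(|h|²̄ − |h|²)) dx dt for some c > 0, κ₀ > 0, then |m|²̄ = |m|² a.e., and consequently m_n → m strongly in L². -/

import Mathlib

/-!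
Expanding `‖fₙ - f‖² ψ` and passing to the limit shows that, for every bounded weight `ψ`,
`∫ ‖fₙ - f‖² ψ → ∫ (fb - ‖f‖²) ψ`, where `fb` is the weak limit of `‖fₙ‖²`.
Weights `ψ = 1_s` give the convexity bound `‖m‖² ≤ |m|²̄` a.e. (and likewise for `h`), so in
`∫(|m|²̄ - |m|²) ≤ -c ∫((|m|²̄ - |m|²) + κ₀ (|h|²̄ - |h|²))` the left side is nonnegative and the
right side nonpositive; hence `∫(|m|²̄ - |m|²) = 0`, and the weight `ψ = 1` turns this into
`‖mₙ - m‖₂ → 0`.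
-/

open MeasureTheory Filter Topology

section
variable {X : Type*} [MeasurableSpace X] {μ : Measure X}
  {E : Type*} [NormedAddCommGroup E] [InnerProductSpace ℝ E]

theorem MeasureTheory.MemLp.integrable_inner {f g : X → E} (hf : MemLp f 2 μ) (hg : MemLp g 2 μ) :
    Integrable (fun x => (inner ℝ (f x) (g x) : ℝ)) μ :=
  memLp_one_iff_integrable.1 ((innerSL ℝ).memLp_of_bilin 1 hf hg)

theorem MeasureTheory.Integrable.mul_of_bound {f ψ : X → ℝ} (hf : Integrable f μ)
    (hψ : Measurable ψ) {C : ℝ} (hψC : ∀ x, |ψ x| ≤ C) :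
    Integrable (fun x => f x * ψ x) μ := by
  simpa only [mul_comm] using hf.bdd_mul hψ.aestronglyMeasurable (.of_forall hψC)

theorem MeasureTheory.MemLp.smul_of_bound {f : X → E} {ψ : X → ℝ} (hf : MemLp f 2 μ)
    (hψ : Measurable ψ) {C : ℝ} (hψC : ∀ x, |ψ x| ≤ C) :
    MemLp (fun x => ψ x • f x) 2 μ :=
  hf.smul (memLp_top_of_bound hψ.aestronglyMeasurable C (.of_forall hψC))

theorem tendsto_integral_norm_sub_sq_mul {fseq : ℕ → X → E} {f : X → E} {fb : X → ℝ}
    (hmem : ∀ n, MemLp (fseq n) 2 μ) (hf : MemLp f 2 μ) (hfb : Integrable fb μ)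
    (hweak : ∀ g : X → E, MemLp g 2 μ →
      Tendsto (fun n => ∫ x, (inner ℝ (fseq n x) (g x) : ℝ) ∂μ) atTop
        (𝓝 (∫ x, (inner ℝ (f x) (g x) : ℝ) ∂μ)))
    {ψ : X → ℝ} (hψ : Measurable ψ) {C : ℝ} (hψC : ∀ x, |ψ x| ≤ C)
    (hweak2 : Tendsto (fun n => ∫ x, ‖fseq n x‖ ^ 2 * ψ x ∂μ) atTop
        (𝓝 (∫ x, fb x * ψ x ∂μ))) :
    Tendsto (fun n => ∫ x, ‖fseq n x - f x‖ ^ 2 * ψ x ∂μ) atTop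
      (𝓝 (∫ x, (fb x - ‖f x‖ ^ 2) * ψ x ∂μ)) := by
  have hψf := hf.smul_of_bound hψ hψC
  have hf2 : Integrable (fun x => ‖f x‖ ^ 2 * ψ x) μ := hf.norm.integrable_sq.mul_of_bound hψ hψC
  have hinner : ∫ x, (inner ℝ (f x) (ψ x • f x) : ℝ) ∂μ = ∫ x, ‖f x‖ ^ 2 * ψ x ∂μ := by
    congr 1 with x
    rw [real_inner_smul_right, real_inner_self_eq_norm_sq, mul_comm]
  have hexpand : ∀ n, ∫ x, ‖fseq n x - f x‖ ^ 2 * ψ x ∂μ = ∫ x, ‖fseq n x‖ ^ 2 * ψ x ∂μ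
      - 2 * ∫ x, (inner ℝ (fseq n x) (ψ x • f x) : ℝ) ∂μ + ∫ x, ‖f x‖ ^ 2 * ψ x ∂μ := by
    intro n
    have hn2 := (hmem n).norm.integrable_sq.mul_of_bound hψ hψC
    have hn := ((hmem n).integrable_inner hψf).const_mul 2
    have hsub : Integrable (fun x => ‖fseq n x‖ ^ 2 * ψ x
        - 2 * (inner ℝ (fseq n x) (ψ x • f x) : ℝ)) μ := hn2.sub hn
    rw [← integral_const_mul, ← integral_sub hn2 hn, ← integral_add hsub hf2]
    congr 1 with x
    rw [norm_sub_sq_real, real_inner_smul_right]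
    ring
  have hlimit_eq : ∫ x, (fb x - ‖f x‖ ^ 2) * ψ x ∂μ
      = ∫ x, fb x * ψ x ∂μ - 2 * ∫ x, ‖f x‖ ^ 2 * ψ x ∂μ + ∫ x, ‖f x‖ ^ 2 * ψ x ∂μ := by
    simp only [sub_mul]
    rw [integral_sub (hfb.mul_of_bound hψ hψC) hf2]
    ring
  simp only [hexpand, hlimit_eq]
  exact (hweak2.sub ((hinner ▸ hweak _ hψf).const_mul 2)).add tendsto_const_nhds

theorem ae_norm_sq_le_of_weak_limit {fseq : ℕ → X → E} {f : X → E} {fb : X → ℝ}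
    (hmem : ∀ n, MemLp (fseq n) 2 μ) (hf : MemLp f 2 μ) (hfb : Integrable fb μ)
    (hweak : ∀ g : X → E, MemLp g 2 μ →
      Tendsto (fun n => ∫ x, (inner ℝ (fseq n x) (g x) : ℝ) ∂μ) atTop
        (𝓝 (∫ x, (inner ℝ (f x) (g x) : ℝ) ∂μ)))
    (hweak2 : ∀ ψ : X → ℝ, Measurable ψ → (∃ C : ℝ, ∀ x, |ψ x| ≤ C) →
      Tendsto (fun n => ∫ x, ‖fseq n x‖ ^ 2 * ψ x ∂μ) atTop (𝓝 (∫ x, fb x * ψ x ∂μ))) :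
    0 ≤ᵐ[μ] fun x => fb x - ‖f x‖ ^ 2 := by
  refine ae_nonneg_of_forall_setIntegral_nonneg (hfb.sub hf.norm.integrable_sq) fun s hs _ => ?_
  have hψ : Measurable (s.indicator 1 : X → ℝ) := measurable_const.indicator hs
  have hψC : ∀ x, |s.indicator (1 : X → ℝ) x| ≤ 1 := fun x => by
    by_cases hx : x ∈ s <;> simp [hx]
  have hlim := tendsto_integral_norm_sub_sq_mul hmem hf hfb hweak hψ hψC (hweak2 _ hψ ⟨1, hψC⟩)
  have hnonneg : ∀ n, 0 ≤ ∫ x, ‖fseq n x - f x‖ ^ 2 * s.indicator 1 x ∂μ := fun n =>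
    integral_nonneg fun x =>
      mul_nonneg (sq_nonneg _) (Set.indicator_nonneg (fun _ _ => zero_le_one) x)
  calc 0 ≤ ∫ x, (fb x - ‖f x‖ ^ 2) * s.indicator 1 x ∂μ := ge_of_tendsto' hlim hnonneg
    _ = ∫ x in s, (fb x - ‖f x‖ ^ 2) ∂μ := by
      rw [← integral_indicator hs]
      congr 1 with x
      by_cases hx : x ∈ s <;> simp [hx]
end

theorem eq_zero_of_le_neg_mul_add {a b c κ : ℝ} (ha : 0 ≤ a) (hb : 0 ≤ b) (hc : 0 ≤ c)
    (hκ : 0 ≤ κ) (h : a ≤ -c * (a + κ * b)) : a = 0 := by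
  nlinarith [mul_nonneg (mul_nonneg hc hκ) hb, mul_nonneg hc ha]

theorem weak_limit_squares_strong_convergence_general
    {X : Type*} [MeasurableSpace X] (μ : Measure X)
    {E : Type*} [NormedAddCommGroup E] [InnerProductSpace ℝ E]
    (c κ₀ : ℝ) (hc : 0 < c) (hκ₀ : 0 < κ₀)
    (mseq hseq : ℕ → X → E) (m h : X → E) (mb hb : X → ℝ)
    (hmem : ∀ n, MemLp (mseq n) 2 μ ∧ MemLp (hseq n) 2 μ)
    (hm : MemLp m 2 μ) (hh : MemLp h 2 μ)
    (hmbint : Integrable mb μ) (hhbint : Integrable hb μ)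
    (hweakm : ∀ g : X → E, MemLp g 2 μ →
      Tendsto (fun n => ∫ x, (inner ℝ (mseq n x) (g x) : ℝ) ∂μ) atTop
        (nhds (∫ x, (inner ℝ (m x) (g x) : ℝ) ∂μ)))
    (hweakh : ∀ g : X → E, MemLp g 2 μ →
      Tendsto (fun n => ∫ x, (inner ℝ (hseq n x) (g x) : ℝ) ∂μ) atTop
        (nhds (∫ x, (inner ℝ (h x) (g x) : ℝ) ∂μ)))
    (hweakm2 : ∀ ψ : X → ℝ, Measurable ψ → (∃ C : ℝ, ∀ x, |ψ x| ≤ C) →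
      Tendsto (fun n => ∫ x, ‖mseq n x‖ ^ 2 * ψ x ∂μ) atTop
        (nhds (∫ x, mb x * ψ x ∂μ)))
    (hweakh2 : ∀ ψ : X → ℝ, Measurable ψ → (∃ C : ℝ, ∀ x, |ψ x| ≤ C) →
      Tendsto (fun n => ∫ x, ‖hseq n x‖ ^ 2 * ψ x ∂μ) atTop
        (nhds (∫ x, hb x * ψ x ∂μ)))
    (hineq : (∫ x, (mb x - ‖m x‖ ^ 2) ∂μ) ≤
      -c * ∫ x, ((mb x - ‖m x‖ ^ 2) + κ₀ * (hb x - ‖h x‖ ^ 2)) ∂μ) :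
    (∀ᵐ x ∂μ, mb x = ‖m x‖ ^ 2) ∧
    Tendsto (fun n => ∫ x, ‖mseq n x - m x‖ ^ 2 ∂μ) atTop (nhds 0) := by
  have hm_ae := ae_norm_sq_le_of_weak_limit (fun n => (hmem n).1) hm hmbint hweakm hweakm2
  have hh_ae := ae_norm_sq_le_of_weak_limit (fun n => (hmem n).2) hh hhbint hweakh hweakh2
  have hm_int : Integrable (fun x => mb x - ‖m x‖ ^ 2) μ := hmbint.sub hm.norm.integrable_sq
  have hh_int : Integrable (fun x => hb x - ‖h x‖ ^ 2) μ := hhbint.sub hh.norm.integrable_sq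
  rw [integral_add hm_int (hh_int.const_mul κ₀), integral_const_mul] at hineq
  have hm_defect : ∫ x, (mb x - ‖m x‖ ^ 2) ∂μ = 0 :=
    eq_zero_of_le_neg_mul_add (integral_nonneg_of_ae hm_ae) (integral_nonneg_of_ae hh_ae)
      hc.le hκ₀.le hineq
  refine ⟨?_, ?_⟩
  · filter_upwards [(integral_eq_zero_iff_of_nonneg_ae hm_ae hm_int).1 hm_defect] with x hx
    exact sub_eq_zero.1 hx
  · have hone : ∀ x : X, |(1 : ℝ)| ≤ 1 := fun _ => by norm_num
    simpa only [mul_one, hm_defect] using tendsto_integral_norm_sub_sq_mul (fun n => (hmem n).1)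
      hm hmbint hweakm measurable_const hone (hweakm2 _ measurable_const ⟨1, hone⟩)

/-- Weak compactness argument: if the weak limits of `|mₙ|²`, `|hₙ|²`, `mₙ·hₙ` satisfy
`∫(|h|²̄ + m·h̄) = ∫(|h|² + m·h)` and
`∫(|m|²̄ − |m|²) ≤ −c ∫((|m|²̄ − |m|²) + κ₀(|h|²̄ − |h|²))`, then `|m|²̄ = |m|²` a.e.
and `mₙ → m` strongly in `L²`. -/
theorem weak_limit_squares_strong_convergence
    {X : Type*} [MeasurableSpace X] (μ : Measure X) [IsFiniteMeasure μ]
    {E : Type*} [NormedAddCommGroup E] [InnerProductSpace ℝ E]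
    (c κ₀ : ℝ) (hc : 0 < c) (hκ₀ : 0 < κ₀)
    (mseq hseq : ℕ → X → E) (m h : X → E) (mb hb mhb : X → ℝ)
    (hmem : ∀ n, MemLp (mseq n) 2 μ ∧ MemLp (hseq n) 2 μ)
    (hm : MemLp m 2 μ) (hh : MemLp h 2 μ)
    (hmbint : Integrable mb μ) (hhbint : Integrable hb μ) (hmhbint : Integrable mhb μ)
    (hweakm : ∀ g : X → E, MemLp g 2 μ →
      Tendsto (fun n => ∫ x, (inner ℝ (mseq n x) (g x) : ℝ) ∂μ) atTop
        (nhds (∫ x, (inner ℝ (m x) (g x) : ℝ) ∂μ)))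
    (hweakh : ∀ g : X → E, MemLp g 2 μ →
      Tendsto (fun n => ∫ x, (inner ℝ (hseq n x) (g x) : ℝ) ∂μ) atTop
        (nhds (∫ x, (inner ℝ (h x) (g x) : ℝ) ∂μ)))
    (hweakm2 : ∀ ψ : X → ℝ, Measurable ψ → (∃ C : ℝ, ∀ x, |ψ x| ≤ C) →
      Tendsto (fun n => ∫ x, ‖mseq n x‖ ^ 2 * ψ x ∂μ) atTop
        (nhds (∫ x, mb x * ψ x ∂μ)))
    (hweakh2 : ∀ ψ : X → ℝ, Measurable ψ → (∃ C : ℝ, ∀ x, |ψ x| ≤ C) →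
      Tendsto (fun n => ∫ x, ‖hseq n x‖ ^ 2 * ψ x ∂μ) atTop
        (nhds (∫ x, hb x * ψ x ∂μ)))
    (hweakmh : ∀ ψ : X → ℝ, Measurable ψ → (∃ C : ℝ, ∀ x, |ψ x| ≤ C) →
      Tendsto (fun n => ∫ x, (inner ℝ (mseq n x) (hseq n x) : ℝ) * ψ x ∂μ) atTop
        (nhds (∫ x, mhb x * ψ x ∂μ)))
    (hid : (∫ x, (hb x + mhb x) ∂μ) =
      ∫ x, (‖h x‖ ^ 2 + (inner ℝ (m x) (h x) : ℝ)) ∂μ)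
    (hineq : (∫ x, (mb x - ‖m x‖ ^ 2) ∂μ) ≤
      -c * ∫ x, ((mb x - ‖m x‖ ^ 2) + κ₀ * (hb x - ‖h x‖ ^ 2)) ∂μ) :
    (∀ᵐ x ∂μ, mb x = ‖m x‖ ^ 2) ∧
    Tendsto (fun n => ∫ x, ‖mseq n x - m x‖ ^ 2 ∂μ) atTop (nhds 0) :=
  weak_limit_squares_strong_convergence_general μ c κ₀ hc hκ₀ mseq hseq m h mb hb hmem hm hh hmbint
    hhbint hweakm hweakh hweakm2 hweakh2 hineq
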